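/- Equality in the binomial Poincaré inequality ∑_k b_{n,t}(k)f(k)² ≤ nt(1-t)∑_k b_{n,t}(k)(∇_n f(k))² (for f with ∑_k f(k)b_{n,t}(k) = 0) holds if and only if f is a linear combination of φ_1(k) = (k - nt)/(1-t) and φ_n(k) = n!·(−t/(1-t))^{n-k}. -/

import Mathlib

/-!
In `L²(b_{n,t})` on `{0, …, n}` the Krawtchouk polynomials `ψ_0, …, ψ_n`, generated by
`G_k(w) = A(w)^k B(w)^(n-k)` with `A(w) = 1 + (1-t) w`, `B(w) = 1 - t w`, are orthogonal with
`‖ψ_r‖² = C(n,r) (t(1-t))^r`: the generating function of `∑_k b(k) ψ_r(k) ψ_s(k)` is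
`(t A(v) A(w) + (1-t) B(v) B(w))^n = (1 + t(1-t) v w)^n`.
Being `n + 1` of them, they form a basis. The operator `∇_n` lowers the index,
`∇ψ_{r+1} = (n-r)/n · ψ_r`, because `n ∇_k G_k(w) = w (n G_k(w) - w G_k'(w))`.
So for `f = ∑ a_r ψ_r` with mean zero (`a_0 = 0`),
`n t (1-t) ‖∇f‖² - ‖f‖² = ∑_r r (n-1-r)/n · ‖ψ_{r+1}‖² a_{r+1}²`,
a sum of nonnegative terms that vanishes exactly when `a_r = 0` for `1 < r < n`.
-/

open Finset

/-- The binomial mass function `b_{n,t}` on `ℤ`, supported on `{0,...,n}`. -/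
noncomputable def binom (n : ℕ) (t : ℝ) (k : ℤ) : ℝ :=
  if 0 ≤ k ∧ k ≤ (n : ℤ) then (n.choose k.toNat : ℝ) * t ^ k.toNat * (1 - t) ^ (n - k.toNat)
  else 0

open Polynomial

section WeightedInner

variable {α ι : Type*} {s : Finset α} {w : α → ℝ}

variable (s w) in
def weightedInner (f g : α → ℝ) : ℝ := ∑ x ∈ s, w x * f x * g x

lemma weightedInner_comm (f g : α → ℝ) : weightedInner s w f g = weightedInner s w g f :=
  sum_congr rfl fun _ _ => by ring

lemma weightedInner_self (f : α → ℝ) : weightedInner s w f f = ∑ x ∈ s, w x * f x ^ 2 :=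
  sum_congr rfl fun _ _ => by ring

lemma weightedInner_congr {f f' g g' : α → ℝ} (hf : Set.EqOn f f' s) (hg : Set.EqOn g g' s) :
    weightedInner s w f g = weightedInner s w f' g' :=
  sum_congr rfl fun x hx => by rw [hf hx, hg hx]

lemma weightedInner_sum_smul_left (I : Finset ι) (a : ι → ℝ) (v : ι → α → ℝ) (g : α → ℝ) :
    weightedInner s w (∑ i ∈ I, a i • v i) g = ∑ i ∈ I, a i * weightedInner s w (v i) g := by
  simp only [weightedInner, Finset.sum_apply, Pi.smul_apply, smul_eq_mul, sum_mul, mul_sum]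
  rw [sum_comm]
  exact sum_congr rfl fun _ _ => sum_congr rfl fun _ _ => by ring

variable {I : Finset ι} {v : ι → α → ℝ}

lemma weightedInner_sum_smul_left_of_pairwise
    (hv : Pairwise fun i j => weightedInner s w (v i) (v j) = 0) (a : ι → ℝ) {j : ι} (hj : j ∈ I) :
    weightedInner s w (∑ i ∈ I, a i • v i) (v j) = a j * weightedInner s w (v j) (v j) := by
  rw [weightedInner_sum_smul_left, sum_eq_single_of_mem j hj]
  intro i _ hij
  rw [hv hij, mul_zero]

lemma weightedInner_sum_smul_self_of_pairwise
    (hv : Pairwise fun i j => weightedInner s w (v i) (v j) = 0) (a : ι → ℝ) :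
    weightedInner s w (∑ i ∈ I, a i • v i) (∑ i ∈ I, a i • v i)
      = ∑ i ∈ I, a i ^ 2 * weightedInner s w (v i) (v i) := by
  rw [weightedInner_comm, weightedInner_sum_smul_left]
  refine sum_congr rfl fun j hj => ?_
  rw [weightedInner_comm, weightedInner_sum_smul_left_of_pairwise hv a hj]
  ring

lemma exists_eqOn_sum_smul_of_pairwise {v : ℕ → α → ℝ}
    (hv : Pairwise fun i j => weightedInner s w (v i) (v j) = 0)
    (hv₀ : ∀ i < #s, weightedInner s w (v i) (v i) ≠ 0) (f : α → ℝ) :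
    ∃ a : ℕ → ℝ, Set.EqOn f (∑ i ∈ range #s, a i • v i) s := by
  let u : Fin #s → s → ℝ := fun i x => v i x
  have hu : LinearIndependent ℝ u := by
    rw [Fintype.linearIndependent_iff]
    intro g hg j
    have hzero : Set.EqOn (∑ i : Fin #s, g i • fun x => v i x) 0 s := fun x hx => by
      simpa [u] using congrFun hg ⟨x, hx⟩
    have h := weightedInner_sum_smul_left_of_pairwise (I := univ) (w := w)
      (hv.comp_of_injective Fin.val_injective) g (mem_univ j)
    rw [weightedInner_congr hzero (Set.eqOn_refl _ _)] at h
    simp only [weightedInner, Pi.zero_apply, mul_zero, zero_mul, sum_const_zero] at h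
    exact (mul_eq_zero.1 h.symm).resolve_right (hv₀ j j.isLt)
  have hspan := hu.span_eq_top_of_card_eq_finrank' (by simp)
  obtain ⟨c, hc⟩ := (Submodule.mem_span_range_iff_exists_fun ℝ).1
    (hspan ▸ Submodule.mem_top : (fun x : s => f x) ∈ Submodule.span ℝ (Set.range u))
  refine ⟨fun i => if h : i < #s then c ⟨i, h⟩ else 0, fun x hx => ?_⟩
  rw [sum_range, ← congrFun hc ⟨x, hx⟩]
  simp [u]

end WeightedInner

lemma sum_Icc_zero_eq_sum_range {M : Type*} [AddCommMonoid M] (n : ℕ) (F : ℤ → M) :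
    ∑ k ∈ Icc (0 : ℤ) n, F k = ∑ m ∈ range (n + 1), F m := by
  rw [Int.Icc_eq_finset_map, sum_map]
  simp

lemma coeff_one_add_C_mul_X_pow {R : Type*} [CommSemiring R] (c : R) (n r : ℕ) :
    ((1 + C c * X) ^ n).coeff r = n.choose r * c ^ r := by
  rw [add_comm, add_pow]
  simp only [one_pow, mul_one, mul_pow, ← C_pow, finsetSum_coeff, ← C_eq_natCast, coeff_mul_C,
    coeff_C_mul_X_pow, ite_mul, zero_mul, sum_ite_eq, mem_range, Nat.lt_succ_iff]
  split_ifs with h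
  · exact mul_comm _ _
  · simp [Nat.choose_eq_zero_of_lt (not_le.1 h)]

lemma coeff_X_sq_mul_derivative_succ {R : Type*} [CommSemiring R] (p : R[X]) (r : ℕ) :
    (X ^ 2 * derivative p).coeff (r + 1) = r * p.coeff r := by
  rcases r with _ | r
  · simp [coeff_X_pow_mul']
  · rw [show r + 1 + 1 = r + 2 from rfl, coeff_X_pow_mul, coeff_derivative]
    push_cast
    ring

lemma exists_smul_add_smul_eq_sum_range {R M : Type*} [Semiring R] [AddCommMonoid M] [Module R M]
    {n : ℕ} (v : ℕ → M) {a : ℕ → R} (h₀ : a 0 = 0) (h : ∀ r, 1 < r → r < n → a r = 0) :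
    ∃ c d : R, c • v 1 + d • v n = ∑ r ∈ range (n + 1), a r • v r :=
  Submodule.mem_span_pair.1 <| Submodule.sum_mem _ fun r hr => by
    have hrn := Nat.lt_succ_iff.1 (mem_range.1 hr)
    rcases (by omega : r = 0 ∨ r = 1 ∨ (1 < r ∧ r < n) ∨ r = n) with rfl | rfl | ⟨h₁, h₂⟩ | rfl
    · simp [h₀]
    · exact Submodule.smul_mem _ _ (Submodule.subset_span (by simp))
    · simp [h r h₁ h₂]
    · exact Submodule.smul_mem _ _ (Submodule.subset_span (by simp))

lemma exists_mul_add_mul_iff {α K : Type*} [Field K] {s : Set α} {f u v u' v' : α → K} {p q : K}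
    (hp : p ≠ 0) (hq : q ≠ 0) (hu : ∀ x ∈ s, u x = p * u' x) (hv : ∀ x ∈ s, v x = q * v' x) :
    (∃ c d, ∀ x ∈ s, f x = c * u x + d * v x) ↔ ∃ c d, ∀ x ∈ s, f x = c * u' x + d * v' x := by
  constructor
  · rintro ⟨c, d, h⟩
    exact ⟨c * p, d * q, fun x hx => by rw [h x hx, hu x hx, hv x hx]; ring⟩
  · rintro ⟨c, d, h⟩
    exact ⟨c / p, d / q, fun x hx => by rw [h x hx, hu x hx, hv x hx]; field_simp⟩

noncomputable def binomGrad (n : ℕ) : (ℤ → ℝ) →ₗ[ℝ] (ℤ → ℝ) where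
  toFun f k := (k : ℝ) / n * (f k - f (k - 1)) + ((n : ℝ) - k) / n * (f (k + 1) - f k)
  map_add' f g := by ext k; simp only [Pi.add_apply]; ring
  map_smul' c f := by ext k; simp only [Pi.smul_apply, smul_eq_mul, RingHom.id_apply]; ring

lemma binomGrad_apply (n : ℕ) (f : ℤ → ℝ) (k : ℤ) :
    binomGrad n f k = (k : ℝ) / n * (f k - f (k - 1)) + ((n : ℝ) - k) / n * (f (k + 1) - f k) :=
  rfl

lemma binomGrad_one (n : ℕ) : binomGrad n 1 = 0 := by
  ext k
  simp [binomGrad_apply]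

lemma binomGrad_eqOn {n : ℕ} {f g : ℤ → ℝ} (h : Set.EqOn f g (Icc (0 : ℤ) n)) :
    Set.EqOn (binomGrad n f) (binomGrad n g) (Icc (0 : ℤ) n) := by
  intro k hk
  obtain ⟨hk₀, hkn⟩ := mem_Icc.1 hk
  have hlo : (k : ℝ) * f (k - 1) = k * g (k - 1) := by
    rcases hk₀.eq_or_lt with rfl | hk₀
    · simp
    · rw [h (mem_Icc.2 ⟨by omega, by omega⟩)]
  have hhi : ((n : ℝ) - k) * f (k + 1) = ((n : ℝ) - k) * g (k + 1) := by
    rcases hkn.eq_or_lt with rfl | hkn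
    · simp
    · rw [h (mem_Icc.2 ⟨by omega, by omega⟩)]
  rw [binomGrad_apply, binomGrad_apply, h hk]
  linear_combination (hhi - hlo) / n

/- With the second exponent computed in `ℤ`, `G (k - 1) = A^(k-1) B^(n-k+1)` and
`G (k + 1) = A^(k+1) B^(n-k-1)` (truncated subtraction in the exponents) hold for every
`k ∈ [0, n]`, the ends included. -/
noncomputable def krawtchoukGen (n : ℕ) (t : ℝ) (k : ℤ) : ℝ[X] :=
  (1 + C (1 - t) * X) ^ k.toNat * (1 - C t * X) ^ ((n : ℤ) - k).toNat

/-- In the paper's normalisation, `krawtchouk n t r = (1 - t)^r / r! · φ_r`. -/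
noncomputable def krawtchouk (n : ℕ) (t : ℝ) (r : ℕ) (k : ℤ) : ℝ :=
  (krawtchoukGen n t k).coeff r

lemma krawtchoukGen_natCast {n m : ℕ} (t : ℝ) (hm : m ≤ n) :
    krawtchoukGen n t m = (1 + C (1 - t) * X) ^ m * (1 - C t * X) ^ (n - m) := by
  simp only [krawtchoukGen, Int.toNat_natCast]
  congr 2
  omega

lemma krawtchoukGen_grad (n : ℕ) (t : ℝ) {k : ℤ} (hk : k ∈ Icc (0 : ℤ) n) :
    (k : ℝ) • (krawtchoukGen n t k - krawtchoukGen n t (k - 1))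
      + ((n : ℝ) - k) • (krawtchoukGen n t (k + 1) - krawtchoukGen n t k)
    = X * ((n : ℝ) • krawtchoukGen n t k) - X ^ 2 * derivative (krawtchoukGen n t k) := by
  obtain ⟨hk₀, hkn⟩ := mem_Icc.1 hk
  lift k to ℕ using hk₀
  obtain ⟨b, rfl⟩ := Nat.exists_eq_add_of_le (Int.ofNat_le.1 hkn)
  have h₀ : ((k : ℤ) + 1).toNat = k + 1 := by omega
  have h₁ : ((k : ℤ) - 1).toNat = k - 1 := by omega
  have h₂ : ((k + b : ℕ) - ((k : ℤ) - 1)).toNat = b + 1 := by omega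
  have h₃ : ((k + b : ℕ) - ((k : ℤ) + 1)).toNat = b - 1 := by omega
  have h₄ : ((k + b : ℕ) - (k : ℤ)).toNat = b := by omega
  simp only [krawtchoukGen, h₀, h₁, h₂, h₃, h₄, Int.toNat_natCast, Int.cast_natCast,
    derivative_mul, derivative_pow]
  rcases k with _ | k <;> rcases b with _ | b <;>
    simp [smul_eq_C_mul, pow_succ] <;> ring

lemma krawtchouk_zero (n : ℕ) (t : ℝ) : krawtchouk n t 0 = 1 :=
  funext fun k => by simp [krawtchouk, krawtchoukGen, coeff_zero_eq_eval_zero]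

lemma krawtchouk_one {n : ℕ} (t : ℝ) {k : ℤ} (hk : k ∈ Icc (0 : ℤ) n) :
    krawtchouk n t 1 k = k - n * t := by
  obtain ⟨hk₀, hkn⟩ := mem_Icc.1 hk
  lift k to ℕ using hk₀
  have hkn : k ≤ n := Int.ofNat_le.1 hkn
  have h := coeff_derivative (krawtchoukGen n t k) 0
  rw [krawtchouk, krawtchoukGen_natCast t hkn] at *
  simp [coeff_zero_eq_eval_zero, derivative_mul, derivative_pow] at h ⊢
  rw [← h]
  push_cast [hkn]
  ring

lemma krawtchouk_top {n : ℕ} (t : ℝ) {k : ℤ} (hk : k ∈ Icc (0 : ℤ) n) :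
    krawtchouk n t n k = (1 - t) ^ k.toNat * (-t) ^ ((n : ℤ) - k).toNat := by
  have hA : (1 + C (1 - t) * X).natDegree ≤ 1 := by compute_degree
  have hB : (1 - C t * X).natDegree ≤ 1 := by compute_degree
  have h := coeff_mul_add_eq_of_natDegree_le (natDegree_pow_le_of_le k.toNat hA)
    (natDegree_pow_le_of_le ((n : ℤ) - k).toNat hB)
  obtain ⟨hk₀, hkn⟩ := mem_Icc.1 hk
  rw [coeff_pow_of_natDegree_le hA, coeff_pow_of_natDegree_le hB,
    show k.toNat * 1 + ((n : ℤ) - k).toNat * 1 = n by omega] at h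
  rw [krawtchouk, krawtchoukGen, h]
  simp [coeff_one]

lemma binomGrad_krawtchouk_succ {n : ℕ} (hn : n ≠ 0) (t : ℝ) (r : ℕ) {k : ℤ}
    (hk : k ∈ Icc (0 : ℤ) n) :
    binomGrad n (krawtchouk n t (r + 1)) k = ((n : ℝ) - r) / n * krawtchouk n t r k := by
  have h := congrArg (coeff · (r + 1)) (krawtchoukGen_grad n t hk)
  simp only [coeff_add, coeff_sub, coeff_smul, smul_eq_mul, coeff_X_mul,
    coeff_X_sq_mul_derivative_succ] at h
  simp only [binomGrad_apply, krawtchouk]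
  field_simp
  linear_combination h

lemma binomGrad_eqOn_sum_krawtchouk {n : ℕ} (hn : n ≠ 0) (t : ℝ) {f : ℤ → ℝ} {a : ℕ → ℝ}
    (hf : Set.EqOn f (∑ r ∈ range (n + 1), a r • krawtchouk n t r) (Icc (0 : ℤ) n)) :
    Set.EqOn (binomGrad n f)
      (∑ r ∈ range n, (a (r + 1) * (((n : ℝ) - r) / n)) • krawtchouk n t r) (Icc (0 : ℤ) n) := by
  intro k hk
  rw [binomGrad_eqOn hf hk, map_sum, sum_range_succ', map_smul, krawtchouk_zero,
    binomGrad_one, smul_zero, add_zero]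
  simp only [map_smul, Finset.sum_apply, Pi.smul_apply, smul_eq_mul,
    binomGrad_krawtchouk_succ hn t _ hk]
  exact sum_congr rfl fun r _ => by ring

lemma binom_natCast {n m : ℕ} (t : ℝ) (hm : m ≤ n) :
    binom n t m = n.choose m * t ^ m * (1 - t) ^ (n - m) := by
  simp [binom, hm]

lemma sum_binom_mul_eval_krawtchoukGen (n : ℕ) (t v : ℝ) :
    ∑ k ∈ Icc (0 : ℤ) n, C (binom n t k * (krawtchoukGen n t k).eval v) * krawtchoukGen n t k
      = (1 + C (t * (1 - t) * v) * X) ^ n := by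
  have hsplit : 1 + C (t * (1 - t) * v) * X
      = C (t * (1 + (1 - t) * v)) * (1 + C (1 - t) * X)
        + C ((1 - t) * (1 - t * v)) * (1 - C t * X) := by
    simp only [map_mul, map_add, map_sub, map_one]
    ring
  rw [hsplit, add_pow, sum_Icc_zero_eq_sum_range]
  refine sum_congr rfl fun m hm => ?_
  have hm : m ≤ n := Nat.lt_succ_iff.1 (mem_range.1 hm)
  rw [binom_natCast t hm, krawtchoukGen_natCast t hm]
  simp only [eval_mul, eval_pow, eval_add, eval_sub, eval_one, eval_C, eval_X, map_mul, map_pow,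
    map_natCast, mul_pow]
  ring

lemma weightedInner_krawtchouk (n : ℕ) (t : ℝ) (r s : ℕ) :
    weightedInner (Icc (0 : ℤ) n) (binom n t) (krawtchouk n t r) (krawtchouk n t s)
      = if r = s then n.choose r * (t * (1 - t)) ^ r else 0 := by
  have hgen : ∑ k ∈ Icc (0 : ℤ) n, C (binom n t k * krawtchouk n t r k) * krawtchoukGen n t k
      = C (n.choose r * (t * (1 - t)) ^ r) * X ^ r := by
    refine Polynomial.funext fun v => ?_
    have h := congrArg (coeff · r) (sum_binom_mul_eval_krawtchoukGen n t v)
    simp only [finsetSum_coeff, coeff_C_mul, coeff_one_add_C_mul_X_pow] at h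
    simp only [eval_finsetSum, eval_mul, eval_C, eval_pow, eval_X, krawtchouk]
    rw [mul_assoc, ← mul_pow, ← h]
    exact sum_congr rfl fun k _ => by ring
  have h := congrArg (coeff · s) hgen
  simp only [finsetSum_coeff, coeff_C_mul, coeff_X_pow, mul_ite, mul_one, mul_zero,
    eq_comm (a := s)] at h
  exact h

lemma pairwise_weightedInner_krawtchouk (n : ℕ) (t : ℝ) :
    Pairwise fun r s =>
      weightedInner (Icc (0 : ℤ) n) (binom n t) (krawtchouk n t r) (krawtchouk n t s) = 0 :=
  fun r s hrs => (weightedInner_krawtchouk n t r s).trans (if_neg hrs)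

lemma exists_eqOn_sum_krawtchouk (n : ℕ) {t : ℝ} (ht : t ∈ Set.Ioo (0 : ℝ) 1) (f : ℤ → ℝ) :
    ∃ a : ℕ → ℝ, Set.EqOn f (∑ r ∈ range (n + 1), a r • krawtchouk n t r) (Icc (0 : ℤ) n) := by
  have hcard : #(Icc (0 : ℤ) n) = n + 1 := by simp
  rw [← hcard]
  refine exists_eqOn_sum_smul_of_pairwise (pairwise_weightedInner_krawtchouk n t)
    (fun r hr => ?_) f
  rw [weightedInner_krawtchouk, if_pos rfl]
  have := Nat.choose_pos (Nat.lt_succ_iff.1 (hcard ▸ hr))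
  have : 0 < t * (1 - t) := mul_pos ht.1 (sub_pos.2 ht.2)
  positivity

/- `n t (1-t) ∇^*∇` has eigenvalue `(r + 1)(n - r)/n` on `ψ_{r+1}`, and
`(r + 1)(n - r)/n - 1 = r (n - 1 - r)/n`. -/
lemma binom_poincare_gap_eq_sum {n : ℕ} (hn : n ≠ 0) (t : ℝ) {f : ℤ → ℝ} {a : ℕ → ℝ}
    (ha₀ : a 0 = 0)
    (hf : Set.EqOn f (∑ r ∈ range (n + 1), a r • krawtchouk n t r) (Icc (0 : ℤ) n)) :
    n * t * (1 - t) * weightedInner (Icc (0 : ℤ) n) (binom n t) (binomGrad n f) (binomGrad n f)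
        - weightedInner (Icc (0 : ℤ) n) (binom n t) f f
      = ∑ r ∈ range n, (r * (n - 1 - r) : ℝ) / n * (n.choose (r + 1) * (t * (1 - t)) ^ (r + 1))
          * a (r + 1) ^ 2 := by
  have hv := pairwise_weightedInner_krawtchouk n t
  have hgrad := binomGrad_eqOn_sum_krawtchouk hn t hf
  rw [weightedInner_congr hf hf, weightedInner_congr hgrad hgrad,
    weightedInner_sum_smul_self_of_pairwise hv, weightedInner_sum_smul_self_of_pairwise hv,
    sum_range_succ', ha₀, zero_pow two_ne_zero, zero_mul, add_zero, mul_sum, ← sum_sub_distrib]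
  refine sum_congr rfl fun r hr => ?_
  have hchoose := congrArg (Nat.cast : ℕ → ℝ) (Nat.choose_succ_right_eq n r)
  push_cast [Nat.cast_sub (mem_range.1 hr).le] at hchoose
  have hn' : (n : ℝ) ≠ 0 := Nat.cast_ne_zero.2 hn
  simp only [weightedInner_krawtchouk, ↓reduceIte]
  field_simp
  linear_combination (-(a (r + 1)) ^ 2 * (t * (1 - t)) ^ (r + 1) * (n - r)) * hchoose

lemma binom_poincare_eq_iff_coeff_eq_zero {n : ℕ} (hn : n ≠ 0) {t : ℝ}
    (ht : t ∈ Set.Ioo (0 : ℝ) 1) {f : ℤ → ℝ} {a : ℕ → ℝ} (ha₀ : a 0 = 0)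
    (hf : Set.EqOn f (∑ r ∈ range (n + 1), a r • krawtchouk n t r) (Icc (0 : ℤ) n)) :
    weightedInner (Icc (0 : ℤ) n) (binom n t) f f =
        n * t * (1 - t) *
          weightedInner (Icc (0 : ℤ) n) (binom n t) (binomGrad n f) (binomGrad n f) ↔
      ∀ r, 1 < r → r < n → a r = 0 := by
  have hT : 0 < t * (1 - t) := mul_pos ht.1 (sub_pos.2 ht.2)
  have hnorm : ∀ r ∈ range n, 0 < (n.choose (r + 1) : ℝ) * (t * (1 - t)) ^ (r + 1) :=
    fun r hr => by
      have := Nat.choose_pos (mem_range.1 hr)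
      positivity
  rw [eq_comm, ← sub_eq_zero, binom_poincare_gap_eq_sum hn t ha₀ hf, sum_eq_zero_iff_of_nonneg]
  · constructor
    · intro h r hr₁ hrn
      obtain ⟨j, rfl⟩ : ∃ j, r = j + 1 := ⟨r - 1, by omega⟩
      have hj : (0 : ℝ) < j * (n - 1 - j) / n := by
        have : (j : ℝ) + 1 < n := by exact_mod_cast hrn
        have : (0 : ℝ) < j := by exact_mod_cast (by omega : 0 < j)
        have : (0 : ℝ) < n - 1 - j := by linarith
        positivity
      simpa [hj.ne', (hnorm j (mem_range.2 (by omega))).ne'] using h j (mem_range.2 (by omega))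
    · intro h r hr
      rcases Nat.eq_zero_or_pos r with rfl | hr₀
      · simp
      rcases eq_or_ne (r + 1) n with rfl | hrn
      · simp
      · simp [h (r + 1) (by omega) (by have := mem_range.1 hr; omega)]
  · intro r hr
    have : (r : ℝ) + 1 ≤ n := by exact_mod_cast mem_range.1 hr
    have := hnorm r hr
    have : (0 : ℝ) ≤ n - 1 - r := by linarith
    positivity

theorem binom_poincare_eq_iff_exists_krawtchouk {n : ℕ} (hn : n ≠ 0) {t : ℝ}
    (ht : t ∈ Set.Ioo (0 : ℝ) 1) {f : ℤ → ℝ}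
    (hmean : ∑ k ∈ Icc (0 : ℤ) n, f k * binom n t k = 0) :
    weightedInner (Icc (0 : ℤ) n) (binom n t) f f =
        n * t * (1 - t) *
          weightedInner (Icc (0 : ℤ) n) (binom n t) (binomGrad n f) (binomGrad n f) ↔
      ∃ c d : ℝ, ∀ k ∈ Icc (0 : ℤ) n, f k = c * krawtchouk n t 1 k + d * krawtchouk n t n k := by
  constructor
  · intro heq
    obtain ⟨a, hf⟩ := exists_eqOn_sum_krawtchouk n ht f
    have ha₀ : a 0 = 0 := by
      have h := weightedInner_sum_smul_left_of_pairwise (pairwise_weightedInner_krawtchouk n t) a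
        (mem_range.2 n.succ_pos)
      rw [← weightedInner_congr hf (Set.eqOn_refl _ _), weightedInner_krawtchouk,
        krawtchouk_zero] at h
      simpa [weightedInner, mul_comm, hmean] using h.symm
    obtain ⟨c, d, hcd⟩ := exists_smul_add_smul_eq_sum_range (krawtchouk n t) ha₀
      ((binom_poincare_eq_iff_coeff_eq_zero hn ht ha₀ hf).1 heq)
    refine ⟨c, d, fun k hk => ?_⟩
    have := hf hk
    rw [← hcd] at this
    simpa using this
  · rintro ⟨c, d, hcd⟩
    refine (binom_poincare_eq_iff_coeff_eq_zero hn ht (a := Pi.single 1 c + Pi.single n d)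
      (by simp [hn]) fun k hk => ?_).2 fun r hr₁ hrn => by simp [hr₁.ne', hrn.ne]
    simp [hcd k hk, Finset.sum_apply, add_mul, sum_add_distrib, Pi.single_apply, hn]

/-- equality in the binomial Poincaré inequality holds if and only if `f`
is (on `{0,...,n}`) a linear combination of `φ_1(k) = (k-nt)/(1-t)` and
`φ_n(k) = n!·(−t/(1-t))^{n-k}`. -/
theorem stmt16 (n : ℕ) (hn : 1 ≤ n) (t : ℝ) (ht : t ∈ Set.Ioo (0 : ℝ) 1) (f : ℤ → ℝ)
    (hmean : ∑ k ∈ Icc (0 : ℤ) (n : ℤ), f k * binom n t k = 0) :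
    (∑ k ∈ Icc (0 : ℤ) (n : ℤ), binom n t k * f k ^ 2
        = (n : ℝ) * t * (1 - t) * ∑ k ∈ Icc (0 : ℤ) (n : ℤ),
            binom n t k *
              ((k : ℝ) / n * (f k - f (k - 1)) + ((n : ℝ) - k) / n * (f (k + 1) - f k)) ^ 2)
    ↔ ∃ a c : ℝ, ∀ k ∈ Icc (0 : ℤ) (n : ℤ),
        f k = a * (((k : ℝ) - n * t) / (1 - t))
          + c * (Nat.factorial n : ℝ) * (-t / (1 - t)) ^ ((n : ℤ) - k).toNat := by
  have ht₁ : 1 - t ≠ 0 := (sub_pos.2 ht.2).ne'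
  have key := binom_poincare_eq_iff_exists_krawtchouk (by omega) ht hmean
  simp only [weightedInner_self, binomGrad_apply] at key
  rw [key]
  simp_rw [mul_assoc]
  refine exists_mul_add_mul_iff (s := (Icc (0 : ℤ) n : Set ℤ)) ht₁
    (div_ne_zero (pow_ne_zero n ht₁) (Nat.cast_ne_zero.2 n.factorial_ne_zero))
    (fun k hk => ?_) (fun k hk => ?_)
  · rw [krawtchouk_one t hk]
    field_simp
  · obtain ⟨hk₀, hkn⟩ := mem_Icc.1 hk
    have hsplit : (1 - t) ^ n = (1 - t) ^ k.toNat * (1 - t) ^ ((n : ℤ) - k).toNat := by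
      rw [← pow_add]
      congr 1
      omega
    rw [krawtchouk_top t hk, div_pow, hsplit]
    field_simp
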